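/- Let n ≥ 4, let P be an oriented path on n vertices, and let lrem(P) be the oriented path on n−2 vertices obtained from P by deleting its two endpoints. Let O be a finite digraph such that (i) every 2-coloring c : V(O) → Fin 2 admits a monochromatic induced copy of P, and (ii) the underlying graph of O admits a proper 3-coloring. Let D be any finite digraph, and let D' be obtained from D by adding, for each vertex v of D, two disjoint new copies O⁺_v and O⁻_v of O together with all arcs (v,u) for u a vertex of O⁺_v and all arcs (u,v) for u a vertex of O⁻_v. Then D' admits a P-free 3-coloring if and only if D admits a lrem(P)-free 3-coloring. Moreover, if O is acyclic, then D' is acyclic if and only if D is acyclic. -/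

import Mathlib

/-- A simple digraph on vertex type `V`: no loops and no anti-parallel arcs. -/
structure Digraph' (V : Type*) : Type _ where
  Adj : V → V → Prop
  loopless : ∀ v, ¬ Adj v v
  asymm : ∀ u v, Adj u v → ¬ Adj v u

/-- An induced copy of the digraph `F` in the digraph `D`, given by the embedding `φ`. -/
def IsInducedCopy {α β : Type*} (F : Digraph' α) (D : Digraph' β) (φ : α → β) : Prop :=
  Function.Injective φ ∧ ∀ u v : α, D.Adj (φ u) (φ v) ↔ F.Adj u v

/-- The image of `φ` is monochromatic under the coloring `c`. -/
def Monochromatic {α β : Type*} {k : ℕ} (c : β → Fin k) (φ : α → β) : Prop :=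
  ∃ i : Fin k, ∀ u : α, c (φ u) = i

/-- The coloring `c` of `D` is `F`-free: no induced copy of `F` in `D` is monochromatic. -/
def IsFFreeColoring {α β : Type*} (F : Digraph' α) (D : Digraph' β) {k : ℕ}
    (c : β → Fin k) : Prop :=
  ∀ φ : α → β, IsInducedCopy F D φ → ¬ Monochromatic c φ

/-- A digraph is acyclic if it contains no directed cycle. -/
def Digraph'.Acyclic {β : Type*} (D : Digraph' β) : Prop :=
  ∀ v : β, ¬ Relation.TransGen D.Adj v v

/-- The underlying simple graph of a digraph. -/
def Digraph'.underlying {V : Type*} (D : Digraph' V) : SimpleGraph V where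
  Adj u v := D.Adj u v ∨ D.Adj v u
  symm := ⟨fun _ _ h => Or.symm h⟩
  loopless := ⟨fun v h => h.elim (D.loopless v) (D.loopless v)⟩

/-- `P` is an oriented path on `n` vertices `0, 1, …, n-1` (in path order):
for each `i < n-1` exactly one of `(i, i+1)`, `(i+1, i)` is an arc (exactness of the choice
is already guaranteed by `asymm`), and there are no other arcs. -/
def IsOrientedPath {n : ℕ} (P : Digraph' (Fin n)) : Prop :=
  (∀ u v : Fin n, P.Adj u v → u.val + 1 = v.val ∨ v.val + 1 = u.val) ∧
  (∀ i : Fin n, ∀ h : i.val + 1 < n, P.Adj i ⟨i.val + 1, h⟩ ∨ P.Adj ⟨i.val + 1, h⟩ i)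

/-- The arc relation of the digraph `D'` obtained from `D` by adding, for each vertex `v` of
`D`, two disjoint copies of `O` (`true` the "plus" copy, `false` the "minus" copy), with all
arcs from `v` into the plus copy and all arcs from the minus copy into `v`. -/
def attachTwoRel {V ω : Type*} (D : Digraph' V) (O : Digraph' ω) :
    (V ⊕ (V × Bool × ω)) → (V ⊕ (V × Bool × ω)) → Prop
  | Sum.inl u, Sum.inl v => D.Adj u v
  | Sum.inl v, Sum.inr (w, b, _) => v = w ∧ b = true
  | Sum.inr (w, b, _), Sum.inl v => v = w ∧ b = false
  | Sum.inr (v, b, u), Sum.inr (v', b', u') => v = v' ∧ b = b' ∧ O.Adj u u'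

/-!
Color `D'` by a `Q`-free coloring of `D` together with a proper coloring of each attached copy
of `O`. In a monochromatic induced path, a vertex lying in a copy `O±_v` cannot have a path
neighbor in the same copy (that arc would be properly colored), so all its path neighbors
equal `v`; by injectivity it is an endpoint of the path. The interior is thus a monochromatic copy
of `Q` in `D`.

Conversely, since every `2`-coloring of `O` has a monochromatic `P`, each copy of `O` sees all
three colors under a `P`-free coloring of `D'`. A monochromatic copy of `Q` in `D` then extends
at both ends, into `O⁺` or `O⁻` according to the orientation of the end arcs of `P`, to a
monochromatic copy of `P` in `D'`.

No arc leaves a copy `O⁺_v` and none enters a copy `O⁻_v`, so every directed cycle of `D'` lies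
in `D` or in a single copy of `O`.
-/

open Relation Function

namespace IsInducedCopy

variable {α β γ : Type*} {F : Digraph' α} {G : Digraph' β} {H : Digraph' γ} {f : α → β}
  {g : β → γ}

lemma comp (hg : IsInducedCopy G H g) (hf : IsInducedCopy F G f) :
    IsInducedCopy F H (g ∘ f) :=
  ⟨hg.1.comp hf.1, fun u v => (hg.2 _ _).trans (hf.2 u v)⟩

lemma of_comp (hg : IsInducedCopy G H g) (h : IsInducedCopy F H (g ∘ f)) :
    IsInducedCopy F G f :=
  ⟨h.1.of_comp, fun u v => (hg.2 _ _).symm.trans (h.2 u v)⟩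

lemma underlying_adj (hf : IsInducedCopy F G f) {u v : α} (h : F.underlying.Adj u v) :
    G.underlying.Adj (f u) (f v) :=
  h.imp (hf.2 u v).2 (hf.2 v u).2

end IsInducedCopy

lemma exists_monochromatic_of_forall_ne {α β : Type*} {k : ℕ} {F : Digraph' α}
    {G : Digraph' β} (hG : ∀ c : β → Fin k, ∃ φ, IsInducedCopy F G φ ∧ Monochromatic c φ)
    (c : β → Fin (k + 1)) (i : Fin (k + 1)) (hi : ∀ x, c x ≠ i) :
    ∃ φ, IsInducedCopy F G φ ∧ Monochromatic c φ := by
  choose c' hc' using fun x => Fin.exists_succAbove_eq (hi x)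
  obtain ⟨φ, hφ, j, hj⟩ := hG c'
  exact ⟨φ, hφ, i.succAbove j, fun u => by rw [← hc', hj]⟩

lemma Fin.eq_zero_or_eq_last_or_eq_succ_castSucc {m : ℕ} (a : Fin (m + 2)) :
    a = 0 ∨ a = Fin.last (m + 1) ∨ ∃ j : Fin m, a = j.castSucc.succ := by
  rcases a.eq_zero_or_eq_succ with rfl | ⟨a, rfl⟩
  · exact .inl rfl
  rcases a.eq_castSucc_or_eq_last with ⟨j, rfl⟩ | rfl
  · exact .inr (.inr ⟨j, rfl⟩)
  · exact .inr (.inl rfl)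

lemma isInducedCopy_succ_castSucc {m : ℕ} {P : Digraph' (Fin (m + 2))} {Q : Digraph' (Fin m)}
    (hQ : ∀ i j : Fin m, Q.Adj i j ↔ P.Adj i.castSucc.succ j.castSucc.succ) :
    IsInducedCopy Q P (Fin.succ ∘ Fin.castSucc) :=
  ⟨(Fin.succ_injective _).comp (Fin.castSucc_injective _), fun i j => (hQ i j).symm⟩

lemma Relation.TransGen.exists_of_forall_map {α β : Type*} {r : α → α → Prop}
    {s : β → β → Prop} {f : α → β} (hf : ∀ a y, s (f a) y → ∃ b, y = f b ∧ r a b) {a : α}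
    {y : β} (h : TransGen s (f a) y) : ∃ b, y = f b ∧ TransGen r a b := by
  induction h with
  | single h => exact (hf _ _ h).imp fun b ⟨hy, hab⟩ => ⟨hy, .single hab⟩
  | tail _ h ih =>
    obtain ⟨b, rfl, hab⟩ := ih
    exact (hf _ _ h).imp fun c ⟨hy, hbc⟩ => ⟨hy, hab.tail hbc⟩

namespace IsOrientedPath

section

variable {m : ℕ} {P : Digraph' (Fin (m + 2))}

lemma underlying_adj_castSucc_succ (hP : IsOrientedPath P) (i : Fin (m + 1)) :
    P.underlying.Adj i.castSucc i.succ :=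
  hP.2 i.castSucc (by simp [i.isLt])

lemma val_eq_one_of_underlying_adj_zero (hP : IsOrientedPath P) {a : Fin (m + 2)}
    (h : P.underlying.Adj 0 a) : a.val = 1 := by
  rcases h with h | h <;> have := hP.1 _ _ h <;> simp only [Fin.val_zero] at this <;> omega

lemma val_eq_of_underlying_adj_last (hP : IsOrientedPath P) {a : Fin (m + 2)}
    (h : P.underlying.Adj (Fin.last (m + 1)) a) : a.val = m := by
  rcases h with h | h <;> have := hP.1 _ _ h <;> simp only [Fin.val_last] at this <;> omega

end

variable {m : ℕ} {P : Digraph' (Fin (m + 3))}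

lemma not_underlying_adj_zero_last (hP : IsOrientedPath P) :
    ¬ P.underlying.Adj 0 (Fin.last (m + 2)) := fun h => by
  have := hP.val_eq_one_of_underlying_adj_zero h
  simp at this

lemma adj_zero_succ_castSucc_iff (hP : IsOrientedPath P) (j : Fin (m + 1)) :
    P.Adj 0 j.castSucc.succ ↔ j = 0 ∧ ¬ P.Adj 1 0 := by
  refine ⟨fun h => ?_, fun ⟨hj, h⟩ => hj ▸ (hP.underlying_adj_castSucc_succ 0).resolve_right h⟩
  have hj : j = 0 := Fin.ext (by simpa using hP.val_eq_one_of_underlying_adj_zero (.inl h))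
  subst hj
  exact ⟨rfl, P.asymm _ _ h⟩

lemma adj_succ_castSucc_zero_iff (hP : IsOrientedPath P) (j : Fin (m + 1)) :
    P.Adj j.castSucc.succ 0 ↔ j = 0 ∧ P.Adj 1 0 := by
  refine ⟨fun h => ?_, fun ⟨hj, h⟩ => hj ▸ h⟩
  have hj : j = 0 := Fin.ext (by simpa using hP.val_eq_one_of_underlying_adj_zero (.inr h))
  subst hj
  exact ⟨rfl, h⟩

lemma adj_last_succ_castSucc_iff (hP : IsOrientedPath P) (j : Fin (m + 1)) :
    P.Adj (Fin.last (m + 2)) j.castSucc.succ ↔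
      j = Fin.last m ∧ ¬ P.Adj (Fin.last (m + 1)).castSucc (Fin.last (m + 2)) := by
  refine ⟨fun h => ?_, fun ⟨hj, h⟩ =>
    hj ▸ (hP.underlying_adj_castSucc_succ (Fin.last (m + 1))).resolve_left h⟩
  have hj : j = Fin.last m := Fin.ext (by simpa using hP.val_eq_of_underlying_adj_last (.inl h))
  subst hj
  exact ⟨rfl, P.asymm _ _ h⟩

lemma adj_succ_castSucc_last_iff (hP : IsOrientedPath P) (j : Fin (m + 1)) :
    P.Adj j.castSucc.succ (Fin.last (m + 2)) ↔
      j = Fin.last m ∧ P.Adj (Fin.last (m + 1)).castSucc (Fin.last (m + 2)) := by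
  refine ⟨fun h => ?_, fun ⟨hj, h⟩ => hj ▸ h⟩
  have hj : j = Fin.last m := Fin.ext (by simpa using hP.val_eq_of_underlying_adj_last (.inr h))
  subst hj
  exact ⟨rfl, h⟩

end IsOrientedPath

namespace Digraph'

variable {V ω : Type*}

def attachTwo (D : Digraph' V) (O : Digraph' ω) : Digraph' (V ⊕ (V × Bool × ω)) where
  Adj := attachTwoRel D O
  loopless := by
    rintro (v | ⟨v, b, u⟩)
    · exact D.loopless v
    · exact fun h => O.loopless u h.2.2
  asymm := by
    rintro (v | ⟨v, b, u⟩) (v' | ⟨v', b', u'⟩) h h'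
    · exact D.asymm _ _ h h'
    · simp_all [attachTwoRel]
    · simp_all [attachTwoRel]
    · exact O.asymm _ _ h.2.2 h'.2.2

variable {D : Digraph' V} {O : Digraph' ω} {v w : V} {b b' : Bool} {u u' : ω}

@[simp] lemma attachTwo_adj_inl_inl : (D.attachTwo O).Adj (.inl v) (.inl w) ↔ D.Adj v w := .rfl

@[simp] lemma attachTwo_adj_inl_inr :
    (D.attachTwo O).Adj (.inl v) (.inr (w, b, u)) ↔ v = w ∧ b = true := .rfl

@[simp] lemma attachTwo_adj_inr_inl :
    (D.attachTwo O).Adj (.inr (w, b, u)) (.inl v) ↔ v = w ∧ b = false := .rfl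

@[simp] lemma attachTwo_adj_inr_inr :
    (D.attachTwo O).Adj (.inr (v, b, u)) (.inr (w, b', u')) ↔ v = w ∧ b = b' ∧ O.Adj u u' :=
  .rfl

lemma isInducedCopy_inl : IsInducedCopy D (D.attachTwo O) Sum.inl :=
  ⟨Sum.inl_injective, fun _ _ => .rfl⟩

lemma isInducedCopy_inr (v : V) (b : Bool) :
    IsInducedCopy O (D.attachTwo O) fun u => .inr (v, b, u) :=
  ⟨fun _ _ h => by simpa using h, fun _ _ => by simp⟩

lemma attachTwo_underlying_adj_inr {y : V ⊕ (V × Bool × ω)}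
    (h : (D.attachTwo O).underlying.Adj (.inr (v, b, u)) y) :
    y = .inl v ∨ ∃ u', y = .inr (v, b, u') ∧ O.underlying.Adj u u' := by
  rcases y with w | ⟨w, b', u'⟩
  · rcases h with h | h <;> simp_all
  · rcases h with h | h <;> simp_all [Digraph'.underlying]

section Acyclic

lemma transGen_attachTwo_of_inr_true {y : V ⊕ (V × Bool × ω)}
    (h : TransGen (D.attachTwo O).Adj (.inr (v, true, u)) y) :
    ∃ u', y = .inr (v, true, u') ∧ TransGen O.Adj u u' := by
  have hstep : ∀ u y, (D.attachTwo O).Adj (.inr (v, true, u)) y →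
      ∃ u', y = .inr (v, true, u') ∧ O.Adj u u' := by
    rintro u (w | ⟨w, b, u'⟩) hy
    · simp at hy
    · obtain ⟨rfl, rfl, hy⟩ := hy
      exact ⟨u', rfl, hy⟩
  exact h.exists_of_forall_map hstep

lemma transGen_attachTwo_to_inr_false {x : V ⊕ (V × Bool × ω)}
    (h : TransGen (D.attachTwo O).Adj x (.inr (v, false, u))) :
    ∃ u', x = .inr (v, false, u') ∧ TransGen O.Adj u' u := by
  have hstep : ∀ u x, swap (D.attachTwo O).Adj (.inr (v, false, u)) x →
      ∃ u', x = .inr (v, false, u') ∧ swap O.Adj u u' := by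
    rintro u (w | ⟨w, b, u'⟩) hx
    · simp [swap] at hx
    · obtain ⟨rfl, rfl, hx⟩ := hx
      exact ⟨u', rfl, hx⟩
  obtain ⟨u', hx, hu⟩ := (transGen_swap.2 h).exists_of_forall_map hstep
  exact ⟨u', hx, transGen_swap.1 hu⟩

lemma transGen_attachTwo_of_inl {y : V ⊕ (V × Bool × ω)}
    (h : TransGen (D.attachTwo O).Adj (.inl v) y) :
    (∃ w, y = .inl w ∧ TransGen D.Adj v w) ∨ ∃ w u, y = .inr (w, true, u) := by
  induction h with
  | @single y h =>
    rcases y with w | ⟨w, b, u⟩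
    · exact .inl ⟨w, rfl, .single h⟩
    · obtain ⟨rfl, rfl⟩ := h
      exact .inr ⟨v, u, rfl⟩
  | @tail y z _ h ih =>
    rcases ih with ⟨w, rfl, hvw⟩ | ⟨w, u, rfl⟩ <;> rcases z with x | ⟨x, b, u'⟩
    · exact .inl ⟨x, rfl, hvw.tail h⟩
    · obtain ⟨rfl, rfl⟩ := h
      exact .inr ⟨_, u', rfl⟩
    · simp at h
    · obtain ⟨rfl, rfl, -⟩ := h
      exact .inr ⟨_, u', rfl⟩

lemma attachTwo_acyclic_iff (hO : O.Acyclic) : (D.attachTwo O).Acyclic ↔ D.Acyclic := by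
  refine ⟨fun h v hv => h (.inl v) (hv.lift Sum.inl fun _ _ => id), fun h x hx => ?_⟩
  rcases x with v | ⟨v, _ | _, u⟩
  · obtain ⟨w, hw, hvw⟩ | ⟨w, u, hu⟩ := transGen_attachTwo_of_inl hx
    · exact h v (Sum.inl_injective hw ▸ hvw)
    · simp at hu
  · obtain ⟨u', hu', hu⟩ := transGen_attachTwo_to_inr_false hx
    exact hO u (by simp_all)
  · obtain ⟨u', hu', hu⟩ := transGen_attachTwo_of_inr_true hx
    exact hO u (by simp_all)

end Acyclic

section ProperlyColoredCopies

variable {m k : ℕ} {P : Digraph' (Fin (m + 2))} {Q : Digraph' (Fin m)} {c : V → Fin k}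
  {cO : ω → Fin k}

lemma exists_inl_of_monochromatic (hP : IsOrientedPath P)
    (hcO : ∀ u u', O.underlying.Adj u u' → cO u ≠ cO u') {φ : Fin (m + 2) → V ⊕ (V × Bool × ω)}
    (hφ : IsInducedCopy P (D.attachTwo O) φ)
    (hmono : Monochromatic (Sum.elim c (cO ∘ fun x => x.2.2)) φ) (j : Fin m) :
    ∃ v, φ j.castSucc.succ = .inl v := by
  obtain ⟨i, hi⟩ := hmono
  rcases hj : φ j.castSucc.succ with v | ⟨v, b, u⟩
  · exact ⟨v, rfl⟩
  have hnbr : ∀ a, P.underlying.Adj j.castSucc.succ a → φ a = .inl v := by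
    intro a ha
    have hadj := hφ.underlying_adj ha
    rw [hj] at hadj
    obtain h | ⟨u', h, hu⟩ := attachTwo_underlying_adj_inr hadj
    · exact h
    · have h1 := hi j.castSucc.succ
      have h2 := hi a
      rw [hj] at h1
      rw [h] at h2
      exact absurd (h1.trans h2.symm) (hcO u u' hu)
  have hprev := hnbr _ (hP.underlying_adj_castSucc_succ j.castSucc).symm
  have hnext := hnbr _ (hP.underlying_adj_castSucc_succ j.succ)
  exact absurd (congrArg Fin.val (hφ.1 (hprev.trans hnext.symm)))
    (by simp only [Fin.val_castSucc, Fin.val_succ]; omega)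

lemma isFFreeColoring_attachTwo (hP : IsOrientedPath P)
    (hQ : ∀ i j : Fin m, Q.Adj i j ↔ P.Adj i.castSucc.succ j.castSucc.succ)
    (hc : IsFFreeColoring Q D c) (hcO : ∀ u u', O.underlying.Adj u u' → cO u ≠ cO u') :
    IsFFreeColoring P (D.attachTwo O) (Sum.elim c (cO ∘ fun x => x.2.2)) := by
  intro φ hφ hmono
  choose ψ hψ using exists_inl_of_monochromatic hP hcO hφ hmono
  have hcomp : φ ∘ Fin.succ ∘ Fin.castSucc = Sum.inl ∘ ψ := funext hψ
  have hψQ : IsInducedCopy Q D ψ :=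
    isInducedCopy_inl.of_comp (hcomp ▸ hφ.comp (isInducedCopy_succ_castSucc hQ))
  obtain ⟨i, hi⟩ := hmono
  exact hc ψ hψQ ⟨i, fun j => by simpa [hψ] using hi j.castSucc.succ⟩

end ProperlyColoredCopies

lemma exists_color_eq_of_isFFreeColoring {n k : ℕ} {P : Digraph' (Fin n)}
    (hO : ∀ c : ω → Fin k, ∃ φ, IsInducedCopy P O φ ∧ Monochromatic c φ)
    {c : V ⊕ (V × Bool × ω) → Fin (k + 1)} (hc : IsFFreeColoring P (D.attachTwo O) c)
    (v : V) (b : Bool) (i : Fin (k + 1)) : ∃ u, c (.inr (v, b, u)) = i := by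
  by_contra! h
  obtain ⟨φ, hφ, hmono⟩ := exists_monochromatic_of_forall_ne hO _ i h
  exact hc _ ((isInducedCopy_inr v b).comp hφ) hmono

section ExtendAtEnds

open Classical

variable {m : ℕ} (P : Digraph' (Fin (m + 4))) (ψ : Fin (m + 2) → V) (u₀ u₁ : ω)

noncomputable def extendAtEnds : Fin (m + 4) → V ⊕ (V × Bool × ω) :=
  Fin.cons (.inr (ψ 0, decide (P.Adj 1 0), u₀))
    (Fin.snoc (Sum.inl ∘ ψ)
      (.inr (ψ (Fin.last _), decide (P.Adj (Fin.last _).castSucc (Fin.last _)), u₁)))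

@[simp] lemma extendAtEnds_zero :
    extendAtEnds P ψ u₀ u₁ 0 = .inr (ψ 0, decide (P.Adj 1 0), u₀) := rfl

@[simp] lemma extendAtEnds_last :
    extendAtEnds P ψ u₀ u₁ (Fin.last _) =
      .inr (ψ (Fin.last _), decide (P.Adj (Fin.last _).castSucc (Fin.last _)), u₁) := by
  rw [extendAtEnds, ← Fin.succ_last (m + 2), Fin.cons_succ, Fin.snoc_last]

@[simp] lemma extendAtEnds_succ_castSucc (j : Fin (m + 2)) :
    extendAtEnds P ψ u₀ u₁ j.castSucc.succ = .inl (ψ j) := by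
  simp [extendAtEnds]

variable {P ψ}

lemma isInducedCopy_extendAtEnds (hP : IsOrientedPath P) {Q : Digraph' (Fin (m + 2))}
    (hQ : ∀ i j : Fin (m + 2), Q.Adj i j ↔ P.Adj i.castSucc.succ j.castSucc.succ)
    (hψ : IsInducedCopy Q D ψ) :
    IsInducedCopy P (D.attachTwo O) (extendAtEnds P ψ u₀ u₁) := by
  have h0last : ψ 0 ≠ ψ (Fin.last _) := hψ.1.ne (by simp [Fin.ext_iff])
  refine ⟨?_, fun a b => ?_⟩
  · simp [extendAtEnds, Fin.cons_injective_iff, Fin.snoc_injective_iff, Fin.range_snoc,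
      Sum.inl_injective.comp hψ.1, h0last]
  obtain rfl | rfl | ⟨i, rfl⟩ := a.eq_zero_or_eq_last_or_eq_succ_castSucc <;>
    obtain rfl | rfl | ⟨j, rfl⟩ := b.eq_zero_or_eq_last_or_eq_succ_castSucc <;>
    simp only [extendAtEnds_zero, extendAtEnds_last, extendAtEnds_succ_castSucc,
      attachTwo_adj_inl_inl, attachTwo_adj_inl_inr, attachTwo_adj_inr_inl, attachTwo_adj_inr_inr]
  · exact iff_of_false (fun h => O.loopless _ h.2.2) (P.loopless _)
  · exact iff_of_false (fun h => h0last h.1) (fun h => hP.not_underlying_adj_zero_last (.inl h))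
  · rw [hP.adj_zero_succ_castSucc_iff, hψ.1.eq_iff, decide_eq_false_iff_not]
  · exact iff_of_false (fun h => h0last h.1.symm)
      (fun h => hP.not_underlying_adj_zero_last (.inr h))
  · exact iff_of_false (fun h => O.loopless _ h.2.2) (P.loopless _)
  · rw [hP.adj_last_succ_castSucc_iff, hψ.1.eq_iff, decide_eq_false_iff_not]
  · rw [hP.adj_succ_castSucc_zero_iff, hψ.1.eq_iff, decide_eq_true_iff]
  · rw [hP.adj_succ_castSucc_last_iff, hψ.1.eq_iff, decide_eq_true_iff]
  · rw [hψ.2, hQ]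

end ExtendAtEnds

lemma isFFreeColoring_comp_inl {m k : ℕ} {P : Digraph' (Fin (m + 4))} (hP : IsOrientedPath P)
    {Q : Digraph' (Fin (m + 2))}
    (hQ : ∀ i j : Fin (m + 2), Q.Adj i j ↔ P.Adj i.castSucc.succ j.castSucc.succ)
    (hO : ∀ c : ω → Fin k, ∃ φ, IsInducedCopy P O φ ∧ Monochromatic c φ)
    {c : V ⊕ (V × Bool × ω) → Fin (k + 1)} (hc : IsFFreeColoring P (D.attachTwo O) c) :
    IsFFreeColoring Q D (c ∘ Sum.inl) := by
  rintro ψ hψ ⟨i, hi⟩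
  obtain ⟨u₀, hu₀⟩ := exists_color_eq_of_isFFreeColoring hO hc (ψ 0) _ i
  obtain ⟨u₁, hu₁⟩ := exists_color_eq_of_isFFreeColoring hO hc (ψ (Fin.last _)) _ i
  refine hc _ (isInducedCopy_extendAtEnds u₀ u₁ hP hQ hψ) ⟨i, fun a => ?_⟩
  obtain rfl | rfl | ⟨j, rfl⟩ := a.eq_zero_or_eq_last_or_eq_succ_castSucc
  · simpa using hu₀
  · simpa using hu₁
  · simpa using hi j

end Digraph'

/-- Let `n ≥ 4`, `P` an oriented path on `n` vertices and `Q = lrem P` the oriented path on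
`n - 2` vertices obtained by deleting the two endpoints of `P`. Let `O` be a finite digraph
such that every `2`-coloring of `O` has a monochromatic induced copy of `P` and whose
underlying graph is properly `3`-colorable. Then the digraph `D'` obtained from a finite
digraph `D` by attaching two copies of `O` to each vertex as above admits a `P`-free
`3`-coloring iff `D` admits a `Q`-free `3`-coloring; moreover, if `O` is acyclic then `D'`
is acyclic iff `D` is. -/
theorem statement3 {n : ℕ} (hn : 4 ≤ n) (P : Digraph' (Fin n)) (hP : IsOrientedPath P)
    (Q : Digraph' (Fin (n - 2)))
    (hQ : ∀ i j : Fin (n - 2),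
      Q.Adj i j ↔ P.Adj ⟨i.val + 1, by have := i.isLt; omega⟩
        ⟨j.val + 1, by have := j.isLt; omega⟩)
    {ω : Type*} (O : Digraph' ω)
    (hO2 : ∀ c : ω → Fin 2, ∃ φ : Fin n → ω, IsInducedCopy P O φ ∧ Monochromatic c φ)
    (hO3 : ∃ c : ω → Fin 3, ∀ u v : ω, O.underlying.Adj u v → c u ≠ c v)
    {V : Type*} (D : Digraph' V)
    (D' : Digraph' (V ⊕ (V × Bool × ω)))
    (hD' : ∀ x y, D'.Adj x y ↔ attachTwoRel D O x y) :
    ((∃ c : (V ⊕ (V × Bool × ω)) → Fin 3, IsFFreeColoring P D' c) ↔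
        (∃ c : V → Fin 3, IsFFreeColoring Q D c)) ∧
      (O.Acyclic → (D'.Acyclic ↔ D.Acyclic)) := by
  obtain rfl : D' = D.attachTwo O := by
    cases D'
    congr
    funext x y
    exact propext (hD' x y)
  obtain ⟨m, rfl⟩ : ∃ m, n = m + 4 := ⟨n - 4, by omega⟩
  obtain ⟨cO, hcO⟩ := hO3
  exact ⟨⟨fun ⟨c, hc⟩ => ⟨c ∘ Sum.inl, Digraph'.isFFreeColoring_comp_inl hP hQ hO2 hc⟩,
    fun ⟨c, hc⟩ => ⟨_, Digraph'.isFFreeColoring_attachTwo hP hQ hc hcO⟩⟩,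
    Digraph'.attachTwo_acyclic_iff⟩
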